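/- Define Ψ: ℝ³ → H₂ (2×2 real symmetric or complex Hermitian matrices) by Ψ(x,y,t) = (1/2)[[t+x, y],[y, t-x]], and Φ: H₂ → ℝ³ by Φ(A) = (A₁₁ - A₂₂, A₁₂ + A₂₁, A₁₁ + A₂₂). Then: (a) Φ ∘ Ψ = Id on ℝ³; (b) Ψ maps the cone generated by (1,0,1), (0,1,1), (-1,0,1), (0,-1,1) into the cone of positive semidefinite matrices; (c) for every positive semidefinite A ∈ H₂, Φ(A) = (x,y,t) satisfies |x| ≤ t, |y| ≤ t, and not both |x| = t and |y| = t unless A = 0. -/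

import Mathlib

noncomputable section

/-- The map `Ψ : ℝ³ → H₂`. -/
def PsiQubit (x y t : ℝ) : Matrix (Fin 2) (Fin 2) ℝ :=
  (1 / 2 : ℝ) • !![t + x, y; y, t - x]

/-- The map `Φ : H₂ → ℝ³`. -/
def PhiQubit (A : Matrix (Fin 2) (Fin 2) ℝ) : Fin 3 → ℝ :=
  ![A 0 0 - A 1 1, A 0 1 + A 1 0, A 0 0 + A 1 1]

/-! `Ψ` identifies `ℝ³` with the real symmetric `2 × 2` matrices, and it carries the Lorentz cone
`x² + y² ≤ t², 0 ≤ t` exactly onto the positive semidefinite ones. The kite cone lies in the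
Lorentz cone because `x² + y² ≤ (|x| + |y|)²`, and the Lorentz cone lies in the cone over the square,
touching its edges `|x| = t`, `|y| = t` simultaneously only at `t = 0`, where the trace vanishes. -/

theorem Matrix.posSemidef_fin_two_iff {a b c : ℝ} :
    !![a, b; b, c].PosSemidef ↔ 0 ≤ a ∧ 0 ≤ c ∧ b ^ 2 ≤ a * c := by
  constructor
  · intro h
    have hdet := h.det_nonneg
    rw [Matrix.det_fin_two_of] at hdet
    exact ⟨by simpa using h.diag_nonneg (i := 0), by simpa using h.diag_nonneg (i := 1),
      by nlinarith⟩
  · rintro ⟨ha, hc, hb⟩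
    refine .of_dotProduct_mulVec_nonneg ?_ fun v => ?_
    · ext i j
      fin_cases i <;> fin_cases j <;> rfl
    · have hq : star v ⬝ᵥ (!![a, b; b, c]).mulVec v =
          a * v 0 ^ 2 + 2 * b * v 0 * v 1 + c * v 1 ^ 2 := by
        simp only [dotProduct, Matrix.mulVec, Fin.sum_univ_two, Pi.star_apply, star_trivial,
          Matrix.of_apply, Matrix.cons_val', Matrix.cons_val_fin_one, Matrix.cons_val_zero,
          Matrix.cons_val_one]
        ring
      rw [hq]
      -- `a · q(v) = (a v₀ + b v₁)² + (ac - b²) v₁²`, and `b = 0` when `a = 0`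
      rcases ha.eq_or_lt with rfl | ha
      · obtain rfl : b = 0 := by nlinarith
        simp only [zero_mul, mul_zero, zero_add]
        positivity
      · refine nonneg_of_mul_nonneg_right ?_ ha
        nlinarith [sq_nonneg (a * v 0 + b * v 1), mul_nonneg (sub_nonneg.2 hb) (sq_nonneg (v 1))]

theorem PsiQubit_eq (x y t : ℝ) :
    PsiQubit x y t = !![(t + x) / 2, y / 2; y / 2, (t - x) / 2] := by
  rw [PsiQubit, Matrix.smul_of]
  simp only [Matrix.smul_cons, Matrix.smul_empty, smul_eq_mul]
  ring_nf

theorem PsiQubit_posSemidef_iff {x y t : ℝ} :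
    (PsiQubit x y t).PosSemidef ↔ 0 ≤ t ∧ x ^ 2 + y ^ 2 ≤ t ^ 2 := by
  rw [PsiQubit_eq, Matrix.posSemidef_fin_two_iff]
  constructor
  · rintro ⟨hp, hm, hdet⟩
    exact ⟨by linarith, by nlinarith⟩
  · rintro ⟨ht, hdisk⟩
    have hx : |x| ≤ t := abs_le_of_sq_le_sq (by nlinarith) ht
    obtain ⟨hx₁, hx₂⟩ := abs_le.1 hx
    exact ⟨by linarith, by linarith, by nlinarith⟩

theorem PhiQubit_PsiQubit (x y t : ℝ) : PhiQubit (PsiQubit x y t) = ![x, y, t] := by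
  rw [PsiQubit_eq]
  simp only [PhiQubit, Matrix.of_apply, Matrix.cons_val', Matrix.cons_val_zero,
    Matrix.cons_val_one, Matrix.cons_val_fin_one]
  ring_nf

theorem PsiQubit_PhiQubit {A : Matrix (Fin 2) (Fin 2) ℝ} (hA : A.IsHermitian) :
    PsiQubit (PhiQubit A 0) (PhiQubit A 1) (PhiQubit A 2) = A := by
  have hsymm : A 1 0 = A 0 1 := hA.apply 0 1
  rw [PsiQubit_eq]
  conv_rhs => rw [A.eta_fin_two]
  simp only [PhiQubit, Matrix.cons_val_zero, Matrix.cons_val_one, Matrix.cons_val_two,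
    Matrix.tail_cons, Matrix.head_cons, hsymm]
  ring_nf

theorem PhiQubit_mem_lorentzCone {A : Matrix (Fin 2) (Fin 2) ℝ} (hA : A.PosSemidef) :
    0 ≤ PhiQubit A 2 ∧ PhiQubit A 0 ^ 2 + PhiQubit A 1 ^ 2 ≤ PhiQubit A 2 ^ 2 := by
  rw [← PsiQubit_posSemidef_iff, PsiQubit_PhiQubit hA.isHermitian]
  exact hA

theorem PhiQubit_two (A : Matrix (Fin 2) (Fin 2) ℝ) : PhiQubit A 2 = A.trace := by
  simp [PhiQubit, Matrix.trace_fin_two]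

theorem sq_add_sq_le_sq_of_abs_add_abs_le {x y t : ℝ} (h : |x| + |y| ≤ t) :
    x ^ 2 + y ^ 2 ≤ t ^ 2 := by
  have hx := abs_nonneg x
  have hy := abs_nonneg y
  calc x ^ 2 + y ^ 2 = |x| ^ 2 + |y| ^ 2 := by rw [sq_abs, sq_abs]
    _ ≤ (|x| + |y|) ^ 2 := by nlinarith
    _ ≤ t ^ 2 := by gcongr

theorem PsiQubit_posSemidef_of_abs_add_abs_le {x y t : ℝ} (h : |x| + |y| ≤ t) :
    (PsiQubit x y t).PosSemidef :=
  PsiQubit_posSemidef_iff.2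
    ⟨(add_nonneg (abs_nonneg x) (abs_nonneg y)).trans h, sq_add_sq_le_sq_of_abs_add_abs_le h⟩

theorem eq_zero_of_sq_add_sq_le_of_abs_eq {x y t : ℝ} (h : x ^ 2 + y ^ 2 ≤ t ^ 2)
    (hx : |x| = t) (hy : |y| = t) : t = 0 := by
  rw [← sq_abs x, ← sq_abs y, hx, hy] at h
  nlinarith

theorem qubit_kite_square_sandwiching :
    (∀ v : Fin 3 → ℝ, PhiQubit (PsiQubit (v 0) (v 1) (v 2)) = v) ∧
    (∀ a b c d : ℝ, 0 ≤ a → 0 ≤ b → 0 ≤ c → 0 ≤ d →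
      ∀ v : Fin 3 → ℝ,
        v = a • ![1, 0, 1] + b • ![0, 1, 1] + c • ![-1, 0, 1] + d • ![0, -1, 1] →
        (PsiQubit (v 0) (v 1) (v 2)).PosSemidef) ∧
    (∀ A : Matrix (Fin 2) (Fin 2) ℝ, A.PosSemidef →
      |PhiQubit A 0| ≤ PhiQubit A 2 ∧ |PhiQubit A 1| ≤ PhiQubit A 2 ∧
      (A ≠ 0 → ¬ (|PhiQubit A 0| = PhiQubit A 2 ∧ |PhiQubit A 1| = PhiQubit A 2))) := by
  refine ⟨fun v => ?_, fun a b c d ha hb hc hd v hv => ?_, fun A hA => ?_⟩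
  · rw [PhiQubit_PsiQubit]
    ext i
    fin_cases i <;> rfl
  · have hv' : v = ![a - c, b - d, a + b + c + d] := by
      rw [hv]
      simp only [Matrix.smul_cons, Matrix.smul_empty, smul_eq_mul, Matrix.cons_add_cons,
        Matrix.empty_add_empty]
      ring_nf
    rw [hv']
    refine PsiQubit_posSemidef_of_abs_add_abs_le ?_
    calc |a - c| + |b - d| ≤ (|a| + |c|) + (|b| + |d|) := add_le_add (abs_sub a c) (abs_sub b d)
      _ = a + b + c + d := by
        rw [abs_of_nonneg ha, abs_of_nonneg hb, abs_of_nonneg hc, abs_of_nonneg hd]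
        ring
  · obtain ⟨ht, hdisk⟩ := PhiQubit_mem_lorentzCone hA
    refine ⟨abs_le_of_sq_le_sq (by nlinarith) ht, abs_le_of_sq_le_sq (by nlinarith) ht,
      fun hA0 ⟨hx, hy⟩ => hA0 ?_⟩
    rw [← hA.trace_eq_zero_iff, ← PhiQubit_two]
    exact eq_zero_of_sq_add_sq_le_of_abs_eq hdisk hx hy
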